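/- Existence of the temperature in target-entropy sampling: let p : Fin n → ℝ (n ≥ 2) be a strictly positive probability vector with a unique maximal entry, and let E be any real with 0 < E < log n. If p is not uniform, then there exists α > 0 such that H(p^α) = E, where p^α_i = p_i^α / ∑_j p_j^α. -/

import Mathlib

/-!
At `α = 0` the tempered distribution is uniform, with entropy `log n`. As `α → ∞` it
concentrates on the unique maximal entry: after dividing numerator and denominator by
`p i₀ ^ α`, every ratio `(p j / p i₀) ^ α` with `j ≠ i₀` tends to `0`, so the entropy tends to
`0`. The entropy depends continuously on `α`, and the intermediate value theorem on some
`[0, A]` yields the temperature.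
-/

open Finset Real

noncomputable def shannonEntropy {n : ℕ} (p : Fin n → ℝ) : ℝ :=
  -∑ i, p i * Real.log (p i)

noncomputable def tempered {n : ℕ} (p : Fin n → ℝ) (α : ℝ) : Fin n → ℝ :=
  fun i => p i ^ α / ∑ j, p j ^ α

open Filter Topology

lemma shannonEntropy_eq_sum_negMulLog {n : ℕ} (q : Fin n → ℝ) :
    shannonEntropy q = ∑ i, negMulLog (q i) := by
  simp [shannonEntropy, negMulLog, ← sum_neg_distrib]

lemma continuous_shannonEntropy {n : ℕ} : Continuous (shannonEntropy : (Fin n → ℝ) → ℝ) := by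
  simp_rw [funext shannonEntropy_eq_sum_negMulLog]
  exact continuous_finsetSum _ fun i _ => continuous_negMulLog.comp (continuous_apply i)

lemma shannonEntropy_uniform (n : ℕ) :
    shannonEntropy (fun _ : Fin n => (n : ℝ)⁻¹) = log n := by
  rcases eq_or_ne n 0 with rfl | hn
  · simp [shannonEntropy]
  · simp [shannonEntropy, log_inv, hn]

lemma shannonEntropy_single {n : ℕ} (i : Fin n) : shannonEntropy (Pi.single i 1) = 0 := by
  rw [shannonEntropy_eq_sum_negMulLog]
  refine sum_eq_zero fun j _ => ?_
  rcases eq_or_ne j i with rfl | hj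
  · simp
  · simp [hj]

lemma tempered_zero {n : ℕ} (p : Fin n → ℝ) : tempered p 0 = fun _ => (n : ℝ)⁻¹ := by
  ext i
  simp [tempered]

section Positive

variable {n : ℕ} {p : Fin n → ℝ} (hpos : ∀ i, 0 < p i)
include hpos

lemma sum_rpow_pos [NeZero n] (α : ℝ) : 0 < ∑ j, p j ^ α :=
  sum_pos (fun j _ => rpow_pos_of_pos (hpos j) α) univ_nonempty

lemma continuous_tempered [NeZero n] : Continuous (tempered p) :=
  continuous_pi fun i =>
    ((continuous_const_rpow (hpos i).ne').div
      (continuous_finsetSum _ fun j _ => continuous_const_rpow (hpos j).ne'))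
      fun α => (sum_rpow_pos hpos α).ne'

lemma tempered_eq_div_sum_ratio_rpow (i₀ : Fin n) (α : ℝ) (j : Fin n) :
    tempered p α j = (p j / p i₀) ^ α / ∑ k, (p k / p i₀) ^ α := by
  have h₀ : p i₀ ^ α ≠ 0 := (rpow_pos_of_pos (hpos i₀) α).ne'
  simp only [tempered, div_rpow (hpos _).le (hpos i₀).le, ← sum_div,
    div_div_div_cancel_right₀ h₀]

lemma tendsto_ratio_rpow_atTop {i₀ : Fin n} (hmax : ∀ j, j ≠ i₀ → p j < p i₀) (j : Fin n) :
    Tendsto (fun α : ℝ => (p j / p i₀) ^ α) atTop (𝓝 ((Pi.single i₀ 1 : Fin n → ℝ) j)) := by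
  rcases eq_or_ne j i₀ with rfl | hj
  · simp [div_self (hpos j).ne']
  · rw [Pi.single_eq_of_ne hj]
    exact tendsto_rpow_atTop_of_base_lt_one _
      (by linarith [div_pos (hpos j) (hpos i₀)]) ((div_lt_one (hpos i₀)).2 (hmax j hj))

lemma tendsto_tempered_atTop {i₀ : Fin n} (hmax : ∀ j, j ≠ i₀ → p j < p i₀) :
    Tendsto (tempered p) atTop (𝓝 (Pi.single i₀ 1)) := by
  have hden : Tendsto (fun α : ℝ => ∑ k, (p k / p i₀) ^ α) atTop (𝓝 1) := by
    simpa using tendsto_finsetSum univ fun k _ => tendsto_ratio_rpow_atTop hpos hmax k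
  refine tendsto_pi_nhds.2 fun j => ?_
  simp_rw [tempered_eq_div_sum_ratio_rpow hpos i₀]
  rw [← div_one ((Pi.single i₀ 1 : Fin n → ℝ) j)]
  exact (tendsto_ratio_rpow_atTop hpos hmax j).div hden one_ne_zero

end Positive

theorem exists_target_entropy_temperature_general {n : ℕ}
    (p : Fin n → ℝ) (E : ℝ)
    (hpos : ∀ i, 0 < p i)
    (hmax : ∃ i : Fin n, ∀ j : Fin n, j ≠ i → p j < p i)
    (hE0 : 0 < E) (hEn : E < Real.log n) :
    ∃ α : ℝ, 0 < α ∧ shannonEntropy (tempered p α) = E := by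
  obtain ⟨i₀, hi₀⟩ := hmax
  have : NeZero n := ⟨Fin.pos i₀ |>.ne'⟩
  set f : ℝ → ℝ := fun α => shannonEntropy (tempered p α)
  have hf_cont : Continuous f := continuous_shannonEntropy.comp (continuous_tempered hpos)
  have hf_zero : f 0 = log n := by
    simp only [f, tempered_zero, shannonEntropy_uniform]
  have hf_top : Tendsto f atTop (𝓝 0) := by
    rw [← shannonEntropy_single i₀]
    exact (continuous_shannonEntropy.tendsto _).comp (tendsto_tempered_atTop hpos hi₀)
  obtain ⟨A, hfA, hA⟩ :=
    ((hf_top.eventually (gt_mem_nhds hE0)).and (eventually_gt_atTop 0)).exists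
  obtain ⟨α, hα, hfα⟩ :=
    intermediate_value_Ioo' hA.le hf_cont.continuousOn ⟨hfA, hf_zero ▸ hEn⟩
  exact ⟨α, hα.1, hfα⟩

/-- Existence of the temperature in target-entropy sampling. -/
theorem exists_target_entropy_temperature {n : ℕ} (hn : 2 ≤ n)
    (p : Fin n → ℝ) (E : ℝ)
    (hpos : ∀ i, 0 < p i) (hsum : ∑ i, p i = 1)
    (hmax : ∃ i : Fin n, ∀ j : Fin n, j ≠ i → p j < p i)
    (hnonunif : ∃ i j : Fin n, p i ≠ p j)
    (hE0 : 0 < E) (hEn : E < Real.log n) :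
    ∃ α : ℝ, 0 < α ∧ shannonEntropy (tempered p α) = E :=
  exists_target_entropy_temperature_general p E hpos hmax hE0 hEn
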